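/- Let S be a real symmetric positive definite n×n matrix that is tridiagonal (S(i,j) = 0 whenever |i − j| > 1), and let η and η̃ be independent random vectors each distributed as the centered multivariate Gaussian N(0, S⁻¹) on ℝⁿ. Define X_k := ½(η_k² + η̃_k²) for k = 0,…,n−1. Then for every 1 ≤ k ≤ n−1 and every t ≥ 0, E[exp(−tX_k) | σ(X₀,…,X_{k−1})] = E[exp(−tX_k) | σ(X_{k−1})] almost surely. In particular the sequence (X₀,…,X_{n−1}) is a Markov chain. -/

import Mathlib

open MeasureTheory ProbabilityTheory Matrix

/-- The centered multivariate Gaussian measure on `ℝⁿ` with (positive definite)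
covariance matrix `S`, defined via its density with respect to Lebesgue measure. -/
noncomputable def multivariateGaussian {n : ℕ} (S : Matrix (Fin n) (Fin n) ℝ) :
    Measure (Fin n → ℝ) :=
  volume.withDensity fun x =>
    ENNReal.ofReal ((Real.sqrt ((2 * Real.pi) ^ n * S.det))⁻¹ *
      Real.exp (-(x ⬝ᵥ S⁻¹.mulVec x) / 2))

/-!
The law of `η` has density proportional to `exp (-xᵀ S x / 2)`. Integrating out the last
coordinate of such a density replaces `S` by the Schur complement of its last diagonal entry,
which is again positive definite and tridiagonal; hence the marginal law of `(η₀, …, η_k)` is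
of the same form. For a tridiagonal precision matrix the last coordinate `η_k` is coupled to
the earlier ones only through `η_{k-1}`, and a one-dimensional Gaussian integral gives
`E[exp (-t η_k² / 2) | η₀, …, η_{k-1}] = c · exp (-β η_{k-1}²)`.
By independence, `E[exp (-t X_k) | η_{<k}, η'_{<k}] = c² exp (-2β X_{k-1})`. This is
`σ(X_{k-1})`-measurable, so it is the conditional expectation given `σ(X₀, …, X_{k-1})` as well
as given `σ(X_{k-1})`.
-/

open Real
open scoped ENNReal

namespace Matrix

variable {m : ℕ}

def IsTridiagonal {n : ℕ} (T : Matrix (Fin n) (Fin n) ℝ) : Prop :=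
  ∀ i j : Fin n, ((i : ℕ) + 1 < (j : ℕ) ∨ (j : ℕ) + 1 < (i : ℕ)) → T i j = 0

noncomputable def schurLast (T : Matrix (Fin (m + 1)) (Fin (m + 1)) ℝ) :
    Matrix (Fin m) (Fin m) ℝ :=
  fun i j => T i.castSucc j.castSucc -
    T i.castSucc (Fin.last m) * T (Fin.last m) j.castSucc / T (Fin.last m) (Fin.last m)

theorem snoc_dotProduct_mulVec_snoc {T : Matrix (Fin (m + 1)) (Fin (m + 1)) ℝ}
    (hT : T.IsHermitian) (hd : T (Fin.last m) (Fin.last m) ≠ 0) (u : Fin m → ℝ) (s : ℝ) :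
    Fin.snoc u s ⬝ᵥ T *ᵥ Fin.snoc u s = u ⬝ᵥ T.schurLast *ᵥ u +
      T (Fin.last m) (Fin.last m) *
        (s + (∑ i, T i.castSucc (Fin.last m) * u i) / T (Fin.last m) (Fin.last m)) ^ 2 := by
  have hsymm : ∀ j : Fin m, T (Fin.last m) j.castSucc = T j.castSucc (Fin.last m) :=
    fun j => by simpa using hT.apply j.castSucc (Fin.last m)
  simp only [schurLast, dotProduct, mulVec, Fin.sum_univ_castSucc, Fin.snoc_castSucc,
    Fin.snoc_last, hsymm]
  set d := T (Fin.last m) (Fin.last m)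
  set b := ∑ i, T i.castSucc (Fin.last m) * u i
  set Q := ∑ i, u i * ∑ j, T i.castSucc j.castSucc * u j
  have hQb : ∑ i, u i * (∑ j, T i.castSucc j.castSucc * u j + T i.castSucc (Fin.last m) * s)
      = Q + b * s := by
    rw [Finset.sum_mul, ← Finset.sum_add_distrib]
    exact Finset.sum_congr rfl fun i _ => by ring
  have hschur : ∑ i, u i * ∑ j,
        (T i.castSucc j.castSucc - T i.castSucc (Fin.last m) * T j.castSucc (Fin.last m) / d) * u j
      = Q - b * (b / d) := by
    rw [Finset.sum_mul, ← Finset.sum_sub_distrib]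
    refine Finset.sum_congr rfl fun i _ => ?_
    rw [Finset.mul_sum, Finset.mul_sum, Finset.sum_div, Finset.mul_sum, ← Finset.sum_sub_distrib]
    exact Finset.sum_congr rfl fun j _ => by ring
  rw [hQb, hschur]
  field_simp
  ring

theorem IsHermitian.schurLast {T : Matrix (Fin (m + 1)) (Fin (m + 1)) ℝ} (hT : T.IsHermitian) :
    T.schurLast.IsHermitian := by
  ext i j
  have hsymm : ∀ a b, T b a = T a b := fun a b => by simpa using hT.apply a b
  simp only [Matrix.schurLast, conjTranspose_apply, star_trivial]
  rw [hsymm i.castSucc, hsymm (Fin.last m) j.castSucc, hsymm i.castSucc (Fin.last m)]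
  ring

theorem PosDef.schurLast {T : Matrix (Fin (m + 1)) (Fin (m + 1)) ℝ} (hT : T.PosDef) :
    T.schurLast.PosDef := by
  have hd : T (Fin.last m) (Fin.last m) ≠ 0 := hT.diag_pos.ne'
  refine PosDef.of_dotProduct_mulVec_pos hT.1.schurLast fun u hu => ?_
  -- the last coordinate that minimises the quadratic form for fixed `u`
  set s := -(∑ i, T i.castSucc (Fin.last m) * u i) / T (Fin.last m) (Fin.last m)
  have hne : (Fin.snoc u s : Fin (m + 1) → ℝ) ≠ 0 := fun h =>
    hu (funext fun i => by simpa using congrFun h i.castSucc)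
  have hpos := hT.dotProduct_mulVec_pos hne
  have hs : s + (∑ i, T i.castSucc (Fin.last m) * u i) / T (Fin.last m) (Fin.last m) = 0 := by
    simp only [s, neg_div, neg_add_cancel]
  rw [star_trivial, snoc_dotProduct_mulVec_snoc hT.1 hd, hs] at hpos
  simpa using hpos

theorem IsTridiagonal.schurLast {T : Matrix (Fin (m + 1)) (Fin (m + 1)) ℝ}
    (hT : T.IsTridiagonal) : T.schurLast.IsTridiagonal := by
  intro i j hij
  have hlast : ∀ l : Fin m, (l : ℕ) + 1 < m → T l.castSucc (Fin.last m) = 0 ∧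
      T (Fin.last m) l.castSucc = 0 := fun l hl =>
    ⟨hT _ _ (Or.inl (by simpa using hl)), hT _ _ (Or.inr (by simpa using hl))⟩
  have hprod : T i.castSucc (Fin.last m) * T (Fin.last m) j.castSucc = 0 := by
    rcases hij with h | h
    · simp [(hlast i (by omega)).1]
    · simp [(hlast j (by omega)).2]
  simp [Matrix.schurLast, hT i.castSucc j.castSucc (by simpa using hij), hprod]

theorem IsTridiagonal.sum_castSucc_mul {j : ℕ} {T : Matrix (Fin (j + 2)) (Fin (j + 2)) ℝ}
    (hT : T.IsTridiagonal) (u : Fin (j + 1) → ℝ) :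
    ∑ i, T i.castSucc (Fin.last (j + 1)) * u i =
      T (Fin.last j).castSucc (Fin.last (j + 1)) * u (Fin.last j) := by
  rw [Fin.sum_univ_castSucc, Finset.sum_eq_zero, zero_add]
  intro i _
  rw [hT _ _ (Or.inl (by simp)), zero_mul]

end Matrix

theorem lintegral_exp_neg_mul_add_sq {d : ℝ} (hd : 0 < d) (a : ℝ) :
    ∫⁻ s : ℝ, ENNReal.ofReal (exp (-(d * (s + a) ^ 2) / 2)) = ENNReal.ofReal (√(2 * π / d)) := by
  have hshift : ∀ s : ℝ, exp (-(d * (s + a) ^ 2) / 2) = exp (-(d / 2) * (s + a) ^ 2) :=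
    fun s => by ring_nf
  have hint : Integrable fun s : ℝ => exp (-(d / 2) * (s + a) ^ 2) := by
    simpa using (integrable_exp_neg_mul_sq (half_pos hd)).comp_add_right a
  simp only [hshift]
  rw [← ofReal_integral_eq_lintegral_ofReal hint (.of_forall fun _ => (exp_pos _).le),
    integral_add_right_eq_self (fun s => exp (-(d / 2) * s ^ 2)), integral_gaussian,
    div_div_eq_mul_div, mul_comm]

theorem lintegral_exp_neg_mul_sq_mul_exp_neg_mul_add_sq {d t : ℝ} (hd : 0 < d) (ht : 0 ≤ t)
    (a : ℝ) :
    ∫⁻ s : ℝ, ENNReal.ofReal (exp (-(t * s ^ 2) / 2)) *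
        ENNReal.ofReal (exp (-(d * (s + a) ^ 2) / 2)) =
      ENNReal.ofReal (exp (-(d * t / (d + t) * a ^ 2) / 2)) *
        ENNReal.ofReal (√(2 * π / (d + t))) := by
  have hdt : 0 < d + t := by linarith
  have hsquare : ∀ s : ℝ, t * s ^ 2 + d * (s + a) ^ 2 =
      d * t / (d + t) * a ^ 2 + (d + t) * (s + d * a / (d + t)) ^ 2 := fun s => by
    field_simp
    ring
  have hprod : ∀ s : ℝ, ENNReal.ofReal (exp (-(t * s ^ 2) / 2)) *
      ENNReal.ofReal (exp (-(d * (s + a) ^ 2) / 2)) =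
      ENNReal.ofReal (exp (-(d * t / (d + t) * a ^ 2) / 2)) *
        ENNReal.ofReal (exp (-((d + t) * (s + d * a / (d + t)) ^ 2) / 2)) := fun s => by
    rw [← ENNReal.ofReal_mul (exp_pos _).le, ← ENNReal.ofReal_mul (exp_pos _).le, ← exp_add,
      ← exp_add, ← add_div, ← add_div, ← neg_add, ← neg_add, hsquare]
  simp only [hprod]
  rw [lintegral_const_mul _ (by fun_prop), lintegral_exp_neg_mul_add_sq hdt]

noncomputable def gaussianWeight {n : ℕ} (T : Matrix (Fin n) (Fin n) ℝ) (x : Fin n → ℝ) : ℝ≥0∞ :=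
  ENNReal.ofReal (exp (-(x ⬝ᵥ T *ᵥ x) / 2))

section Marginal

variable {m : ℕ}

@[fun_prop]
theorem measurable_gaussianWeight (T : Matrix (Fin m) (Fin m) ℝ) :
    Measurable (gaussianWeight T) := by
  unfold gaussianWeight dotProduct mulVec
  fun_prop

theorem lintegral_mul_gaussianWeight_eq_lintegral_snoc {T : Matrix (Fin (m + 1)) (Fin (m + 1)) ℝ}
    (hT : T.IsHermitian) (hd : 0 < T (Fin.last m) (Fin.last m)) {h : (Fin m → ℝ) → ℝ≥0∞}
    (hh : Measurable h) {φ : ℝ → ℝ≥0∞} (hφ : Measurable φ) :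
    ∫⁻ x, h (Fin.init x) * φ (x (Fin.last m)) * gaussianWeight T x =
      ∫⁻ u, h u * gaussianWeight T.schurLast u *
        ∫⁻ s, φ s * ENNReal.ofReal (exp (-(T (Fin.last m) (Fin.last m) *
          (s + (∑ i, T i.castSucc (Fin.last m) * u i) / T (Fin.last m) (Fin.last m)) ^ 2) /
            2)) := by
  have hsplit := (volume_preserving_piFinSuccAbove (fun _ : Fin (m + 1) => ℝ) (Fin.last m)).symm
  rw [← hsplit.lintegral_comp (by fun_prop), Measure.volume_eq_prod,
    lintegral_prod_symm _ (by fun_prop)]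
  refine lintegral_congr fun u => ?_
  rw [← lintegral_const_mul _ (by fun_prop)]
  refine lintegral_congr fun s => ?_
  simp only [MeasurableEquiv.piFinSuccAbove_symm_apply, Fin.insertNthEquiv, Equiv.coe_fn_mk,
    Fin.insertNth_last', Fin.init_snoc, Fin.snoc_last, gaussianWeight]
  rw [snoc_dotProduct_mulVec_snoc hT hd.ne', neg_add, add_div, exp_add,
    ENNReal.ofReal_mul (exp_pos _).le]
  ring

theorem lintegral_comp_init_mul_gaussianWeight {T : Matrix (Fin (m + 1)) (Fin (m + 1)) ℝ}
    (hT : T.IsHermitian) (hd : 0 < T (Fin.last m) (Fin.last m)) {h : (Fin m → ℝ) → ℝ≥0∞}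
    (hh : Measurable h) :
    ∫⁻ x, h (Fin.init x) * gaussianWeight T x =
      ENNReal.ofReal (√(2 * π / T (Fin.last m) (Fin.last m))) *
        ∫⁻ u, h u * gaussianWeight T.schurLast u := by
  have hsnoc := lintegral_mul_gaussianWeight_eq_lintegral_snoc hT hd hh
    (measurable_const (a := (1 : ℝ≥0∞)))
  simp only [mul_one, one_mul, lintegral_exp_neg_mul_add_sq hd] at hsnoc
  rw [hsnoc, lintegral_mul_const _ (by fun_prop), mul_comm]

end Marginal

theorem Matrix.PosDef.exists_tridiagonal_marginal {n m : ℕ} (hmn : m ≤ n)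
    {T : Matrix (Fin n) (Fin n) ℝ} (hT : T.PosDef) (htri : T.IsTridiagonal) :
    ∃ T' : Matrix (Fin m) (Fin m) ℝ, T'.PosDef ∧ T'.IsTridiagonal ∧ ∃ C : ℝ≥0∞,
      ∀ h : (Fin m → ℝ) → ℝ≥0∞, Measurable h →
        ∫⁻ x, h (fun i => x (Fin.castLE hmn i)) * gaussianWeight T x =
          C * ∫⁻ u, h u * gaussianWeight T' u := by
  induction n, hmn using Nat.le_induction with
  | base => exact ⟨T, hT, htri, 1, fun h _ => by simp⟩
  | succ n hmn ih =>
    obtain ⟨T', hT', htri', C, hC⟩ := ih hT.schurLast htri.schurLast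
    refine ⟨T', hT', htri', ENNReal.ofReal (√(2 * π / T (Fin.last n) (Fin.last n))) * C,
      fun h hh => ?_⟩
    have hinit := lintegral_comp_init_mul_gaussianWeight hT.1 hT.diag_pos
      (h := fun u => h fun i => u (Fin.castLE hmn i)) (by fun_prop)
    rw [hC h hh, ← mul_assoc] at hinit
    exact hinit

theorem Matrix.PosDef.exists_lintegral_exp_neg_sq_last_eq {j : ℕ}
    {T : Matrix (Fin (j + 2)) (Fin (j + 2)) ℝ} (hT : T.PosDef) (htri : T.IsTridiagonal)
    {t : ℝ} (ht : 0 ≤ t) :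
    ∃ c β : ℝ, 0 ≤ c ∧ 0 ≤ β ∧ ∀ G : (Fin (j + 1) → ℝ) → ℝ≥0∞, Measurable G →
      ∫⁻ x, G (Fin.init x) * ENNReal.ofReal (exp (-(t * x (Fin.last (j + 1)) ^ 2) / 2)) *
          gaussianWeight T x =
        ∫⁻ x, G (Fin.init x) * ENNReal.ofReal (c * exp (-β * Fin.init x (Fin.last j) ^ 2)) *
          gaussianWeight T x := by
  have hd := hT.diag_pos (i := Fin.last (j + 1))
  set d := T (Fin.last (j + 1)) (Fin.last (j + 1))
  set w := T (Fin.last j).castSucc (Fin.last (j + 1))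
  have hB : 0 < √(2 * π / d) := by positivity
  set c := √(2 * π / (d + t)) / √(2 * π / d)
  set β := d * t / (d + t) * (w / d) ^ 2 / 2
  refine ⟨c, β, by positivity, by positivity, fun G hG => ?_⟩
  refine (lintegral_mul_gaussianWeight_eq_lintegral_snoc hT.1 hd hG
    (φ := fun s => ENNReal.ofReal (exp (-(t * s ^ 2) / 2))) (by fun_prop)).trans
    (Eq.trans ?_ (lintegral_comp_init_mul_gaussianWeight hT.1 hd
      (h := fun u => G u * ENNReal.ofReal (c * exp (-β * u (Fin.last j) ^ 2)))
      (by fun_prop)).symm)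
  rw [← lintegral_const_mul _ (by fun_prop)]
  refine lintegral_congr fun u => ?_
  have hweight : exp (-(d * t / (d + t) * (w * u (Fin.last j) / d) ^ 2) / 2) *
      √(2 * π / (d + t)) = √(2 * π / d) * (c * exp (-β * u (Fin.last j) ^ 2)) := by
    rw [← mul_assoc, mul_div_cancel₀ _ hB.ne', mul_comm]
    congr 2
    ring
  rw [htri.sum_castSucc_mul, lintegral_exp_neg_mul_sq_mul_exp_neg_mul_add_sq hd ht,
    ← ENNReal.ofReal_mul (exp_pos _).le, hweight, ENNReal.ofReal_mul hB.le]
  ring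

theorem lintegral_multivariateGaussian_inv {n : ℕ} {S : Matrix (Fin n) (Fin n) ℝ}
    (hS : IsUnit S.det) {F : (Fin n → ℝ) → ℝ≥0∞} (hF : Measurable F) :
    ∫⁻ x, F x ∂multivariateGaussian S⁻¹ =
      ENNReal.ofReal (√((2 * π) ^ n * S⁻¹.det))⁻¹ * ∫⁻ x, F x * gaussianWeight S x := by
  rw [_root_.multivariateGaussian, nonsing_inv_nonsing_inv S hS,
    lintegral_withDensity_eq_lintegral_mul _ (by fun_prop) hF,
    ← lintegral_const_mul _ (by fun_prop)]
  refine lintegral_congr fun x => ?_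
  rw [Pi.mul_apply, ENNReal.ofReal_mul (by positivity), gaussianWeight]
  ring

theorem Matrix.PosDef.exists_lintegral_multivariateGaussian_inv_exp_neg_sq_eq {n k : ℕ}
    {S : Matrix (Fin n) (Fin n) ℝ} (hS : S.PosDef) (htri : S.IsTridiagonal) (hk1 : 1 ≤ k)
    (hk2 : k < n) {t : ℝ} (ht : 0 ≤ t) :
    ∃ c β : ℝ, 0 ≤ c ∧ 0 ≤ β ∧ ∀ G : (Fin k → ℝ) → ℝ≥0∞, Measurable G →
      ∫⁻ x, G (fun i => x ⟨i, i.isLt.trans hk2⟩) *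
          ENNReal.ofReal (exp (-(t * x ⟨k, hk2⟩ ^ 2) / 2)) ∂multivariateGaussian S⁻¹ =
        ∫⁻ x, G (fun i => x ⟨i, i.isLt.trans hk2⟩) *
          ENNReal.ofReal (c * exp (-β * x ⟨k - 1, by omega⟩ ^ 2)) ∂multivariateGaussian S⁻¹ := by
  obtain ⟨j, rfl⟩ : ∃ j, k = j + 1 := ⟨k - 1, by omega⟩
  obtain ⟨T, hT, htriT, C, hC⟩ := hS.exists_tridiagonal_marginal (m := j + 2) hk2 htri
  obtain ⟨c, β, hc, hβ, hcβ⟩ := hT.exists_lintegral_exp_neg_sq_last_eq htriT ht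
  refine ⟨c, β, hc, hβ, fun G hG => ?_⟩
  have hdet : IsUnit S.det := hS.det_pos.ne'.isUnit
  rw [lintegral_multivariateGaussian_inv hdet (by fun_prop),
    lintegral_multivariateGaussian_inv hdet (by fun_prop)]
  congr 1
  -- both integrands only see `x 0, …, x k`, so they can be integrated against the marginal
  exact (hC (fun u => G (Fin.init u) * ENNReal.ofReal (exp (-(t * u (Fin.last (j + 1)) ^ 2) / 2)))
      (by fun_prop)).trans <| (congrArg (C * ·) (hcβ G hG)).trans
    (hC (fun u => G (Fin.init u) * ENNReal.ofReal (c * exp (-β * Fin.init u (Fin.last j) ^ 2)))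
      (by fun_prop)).symm

section Independence

variable {Ω α β : Type*} [MeasurableSpace Ω] [MeasurableSpace α] [MeasurableSpace β]

theorem lintegral_prod_mul_mul_eq {μ : Measure α} [SFinite μ] {p : α → β} (hp : Measurable p)
    {a b : α → ℝ≥0∞} (ha : Measurable a) (hb : Measurable b)
    (hab : ∀ G : β → ℝ≥0∞, Measurable G → ∫⁻ x, G (p x) * a x ∂μ = ∫⁻ x, G (p x) * b x ∂μ)
    {H : β × β → ℝ≥0∞} (hH : Measurable H) :
    ∫⁻ z, H (p z.1, p z.2) * (a z.1 * a z.2) ∂μ.prod μ =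
      ∫⁻ z, H (p z.1, p z.2) * (b z.1 * b z.2) ∂μ.prod μ := by
  calc _ = ∫⁻ x, ∫⁻ y, H (p x, p y) * (a x * a y) ∂μ ∂μ := lintegral_prod _ (by fun_prop)
    _ = ∫⁻ x, ∫⁻ y, H (p x, p y) * (a x * b y) ∂μ ∂μ := lintegral_congr fun x => by
        convert hab (fun v => H (p x, v) * a x) (by fun_prop) using 3 with y <;> ring
    _ = ∫⁻ y, ∫⁻ x, H (p x, p y) * (a x * b y) ∂μ ∂μ := lintegral_lintegral_swap (by fun_prop)
    _ = ∫⁻ y, ∫⁻ x, H (p x, p y) * (b x * b y) ∂μ ∂μ := lintegral_congr fun y => by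
        convert hab (fun u => H (u, p y) * b y) (by fun_prop) using 3 with x <;> ring
    _ = _ := (lintegral_prod_symm _ (by fun_prop :
        Measurable fun z : α × α => H (p z.1, p z.2) * (b z.1 * b z.2)).aemeasurable).symm

theorem ProbabilityTheory.IndepFun.setLIntegral_mul_mul_eq {P : Measure Ω} [IsFiniteMeasure P]
    {μ : Measure α} {Y Y' : Ω → α} (hY : Measurable Y) (hY' : Measurable Y')
    (hind : IndepFun Y Y' P) (hlaw : P.map Y = μ) (hlaw' : P.map Y' = μ) {p : α → β}
    (hp : Measurable p) {a b : α → ℝ≥0∞} (ha : Measurable a) (hb : Measurable b)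
    (hab : ∀ G : β → ℝ≥0∞, Measurable G → ∫⁻ x, G (p x) * a x ∂μ = ∫⁻ x, G (p x) * b x ∂μ)
    (s : Set Ω)
    (hs : MeasurableSet[MeasurableSpace.comap (fun ω => (p (Y ω), p (Y' ω))) inferInstance] s) :
    ∫⁻ ω in s, a (Y ω) * a (Y' ω) ∂P = ∫⁻ ω in s, b (Y ω) * b (Y' ω) ∂P := by
  subst hlaw
  obtain ⟨C, hC, rfl⟩ := hs
  have hjoint : P.map (fun ω => (Y ω, Y' ω)) = (P.map Y).prod (P.map Y) := by
    rw [(indepFun_iff_map_prod_eq_prod_map_map hY.aemeasurable hY'.aemeasurable).mp hind, hlaw']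
  set W : Ω → β × β := fun ω => (p (Y ω), p (Y' ω))
  have hW : Measurable W := by fun_prop
  have hrestrict : ∀ w : α → ℝ≥0∞, Measurable w →
      ∫⁻ ω in W ⁻¹' C, w (Y ω) * w (Y' ω) ∂P =
        ∫⁻ z, C.indicator 1 (p z.1, p z.2) * (w z.1 * w z.2) ∂P.map (fun ω => (Y ω, Y' ω)) := by
    intro w hw
    rw [← lintegral_indicator (hW hC),
      lintegral_map (by fun_prop) (hY.prodMk hY')]
    refine lintegral_congr fun ω => ?_
    by_cases hω : (p (Y ω), p (Y' ω)) ∈ C <;> simp [W, hω]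
  rw [hrestrict a ha, hrestrict b hb, hjoint]
  exact lintegral_prod_mul_mul_eq hp ha hb hab (measurable_one.indicator hC)

end Independence

section ConditionalExpectation

variable {Ω : Type*} {m₁ m₂ m₀ : MeasurableSpace Ω} {P : Measure Ω} {f g : Ω → ℝ}

theorem ae_eq_condExp_of_forall_setLIntegral_eq (hm : m₁ ≤ m₀) [SigmaFinite (P.trim hm)]
    (hf : Integrable f P) (hg : Integrable g P) (hf₀ : 0 ≤ᵐ[P] f) (hg₀ : 0 ≤ᵐ[P] g)
    (hgm : AEStronglyMeasurable[m₁] g P)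
    (hfg : ∀ s, MeasurableSet[m₁] s →
      ∫⁻ ω in s, ENNReal.ofReal (f ω) ∂P = ∫⁻ ω in s, ENNReal.ofReal (g ω) ∂P) :
    g =ᵐ[P] P[f | m₁] := by
  refine ae_eq_condExp_of_forall_setIntegral_eq hm hf (fun s _ _ => hg.integrableOn)
    (fun s hs _ => ?_) hgm
  rw [integral_eq_lintegral_of_nonneg_ae (ae_restrict_of_ae hg₀) hg.1.restrict,
    integral_eq_lintegral_of_nonneg_ae (ae_restrict_of_ae hf₀) hf.1.restrict, hfg s hs]

/-- `hfg` says that `g` is a version of `P[f | m₁]`; being `m₂`-measurable, it is then also one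
of `P[f | m₂]`. -/
theorem condExp_ae_eq_condExp_of_forall_setLIntegral_eq [IsFiniteMeasure P] (h₂₁ : m₂ ≤ m₁)
    (h₁ : m₁ ≤ m₀) (hf : Integrable f P) (hg : Integrable g P) (hf₀ : 0 ≤ᵐ[P] f)
    (hg₀ : 0 ≤ᵐ[P] g) (hgm : StronglyMeasurable[m₂] g)
    (hfg : ∀ s, MeasurableSet[m₁] s →
      ∫⁻ ω in s, ENNReal.ofReal (f ω) ∂P = ∫⁻ ω in s, ENNReal.ofReal (g ω) ∂P) :
    P[f | m₁] =ᵐ[P] P[f | m₂] :=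
  (ae_eq_condExp_of_forall_setLIntegral_eq h₁ hf hg hf₀ hg₀
      (hgm.mono h₂₁).aestronglyMeasurable hfg).symm.trans
    (ae_eq_condExp_of_forall_setLIntegral_eq (h₂₁.trans h₁) hf hg hf₀ hg₀
      hgm.aestronglyMeasurable fun s hs => hfg s (h₂₁ s hs))

theorem integrable_exp_neg_mul [IsFiniteMeasure P] {X : Ω → ℝ} (hX : Measurable X)
    (hX₀ : ∀ ω, 0 ≤ X ω) {s : ℝ} (hs : 0 ≤ s) : Integrable (fun ω => exp (-s * X ω)) P :=
  .of_bound (by fun_prop) 1 <| ae_of_all _ fun ω => by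
    rw [norm_of_nonneg (exp_pos _).le, exp_le_one_iff]
    exact mul_nonpos_of_nonpos_of_nonneg (neg_nonpos.mpr hs) (hX₀ ω)

end ConditionalExpectation

theorem ProbabilityTheory.IndepFun.setLIntegral_exp_neg_mul_avg_sq_eq {n : ℕ} {ι : Type*}
    {Ω : Type*} [MeasurableSpace Ω] {P : Measure Ω} [IsFiniteMeasure P]
    {μ : Measure (Fin n → ℝ)} {η η' : Ω → Fin n → ℝ} (hη : Measurable η) (hη' : Measurable η')
    (hind : IndepFun η η' P) (hlaw : P.map η = μ) (hlaw' : P.map η' = μ) {X : Fin n → Ω → ℝ}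
    (hX : ∀ i ω, X i ω = ((η ω i) ^ 2 + (η' ω i) ^ 2) / 2) {e : ι → Fin n} {j l : Fin n}
    {t c β : ℝ} (hc : 0 ≤ c)
    (hμ : ∀ G : (ι → ℝ) → ℝ≥0∞, Measurable G →
      ∫⁻ x, G (fun i => x (e i)) * ENNReal.ofReal (exp (-(t * x j ^ 2) / 2)) ∂μ =
        ∫⁻ x, G (fun i => x (e i)) * ENNReal.ofReal (c * exp (-β * x l ^ 2)) ∂μ)
    (s : Set Ω) (hs : MeasurableSet[MeasurableSpace.comap (fun ω i => X (e i) ω) inferInstance] s) :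
    ∫⁻ ω in s, ENNReal.ofReal (exp (-t * X j ω)) ∂P =
      ∫⁻ ω in s, ENNReal.ofReal (c ^ 2 * exp (-(2 * β) * X l ω)) ∂P := by
  have hV : (fun ω i => X (e i) ω) =
      (fun z : (ι → ℝ) × (ι → ℝ) => fun i => (z.1 i ^ 2 + z.2 i ^ 2) / 2) ∘
        fun ω => (fun i => η ω (e i), fun i => η' ω (e i)) := by
    funext ω i
    exact hX _ ω
  have hVW : MeasurableSpace.comap (fun ω i => X (e i) ω) inferInstance ≤
      MeasurableSpace.comap (fun ω => (fun i => η ω (e i), fun i => η' ω (e i))) inferInstance := by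
    rw [hV]
    exact ((by fun_prop : Measurable _).comp (comap_measurable _)).comap_le
  have hpair := hind.setLIntegral_mul_mul_eq hη hη' hlaw hlaw' (by fun_prop)
    (by fun_prop) (by fun_prop) hμ s (hVW s hs)
  refine (lintegral_congr fun ω => ?_).trans (hpair.trans (lintegral_congr fun ω => ?_))
  · rw [hX, ← ENNReal.ofReal_mul (exp_pos _).le, ← exp_add]
    ring_nf
  · rw [hX, ← ENNReal.ofReal_mul (by positivity), mul_mul_mul_comm, ← exp_add]
    ring_nf

/-- Let `S` be symmetric positive definite and tridiagonal, and let
`η, η'` be independent `N(0, S⁻¹)` vectors. With `X k = ½(η k² + η' k²)`, for every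
`1 ≤ k ≤ n − 1` and `t ≥ 0`,
`E[exp (−t X k) | σ(X 0, …, X (k−1))] = E[exp (−t X k) | σ(X (k−1))]` a.s.;
in particular `(X 0, …, X (n−1))` is a Markov chain. -/
theorem squares_of_tridiagonal_gaussian_markov {n : ℕ}
    (S : Matrix (Fin n) (Fin n) ℝ) (hS : S.PosDef)
    (htri : ∀ i j : Fin n, ((i : ℕ) + 1 < (j : ℕ) ∨ (j : ℕ) + 1 < (i : ℕ)) → S i j = 0)
    {Ω : Type*} [MeasurableSpace Ω] (P : Measure Ω) [IsProbabilityMeasure P]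
    (η η' : Ω → Fin n → ℝ) (hη : Measurable η) (hη' : Measurable η')
    (hlawη : Measure.map η P = multivariateGaussian S⁻¹)
    (hlawη' : Measure.map η' P = multivariateGaussian S⁻¹)
    (hindep : IndepFun η η' P)
    (X : Fin n → Ω → ℝ)
    (hX : ∀ k ω, X k ω = ((η ω k) ^ 2 + (η' ω k) ^ 2) / 2) :
    ∀ (k : ℕ) (hk1 : 1 ≤ k) (hk2 : k < n) (t : ℝ), 0 ≤ t →
      P[(fun ω => Real.exp (-t * X ⟨k, hk2⟩ ω)) |
          MeasurableSpace.comap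
            (fun ω => fun i : Fin k => X ⟨(i : ℕ), i.isLt.trans hk2⟩ ω) inferInstance]
        =ᵐ[P]
      P[(fun ω => Real.exp (-t * X ⟨k, hk2⟩ ω)) |
          MeasurableSpace.comap
            (fun ω => X ⟨k - 1, lt_of_le_of_lt (Nat.sub_le k 1) hk2⟩ ω) inferInstance] := by
  intro k hk1 hk2 t ht
  obtain ⟨c, β, hc, hβ, hcβ⟩ :=
    hS.exists_lintegral_multivariateGaussian_inv_exp_neg_sq_eq htri hk1 hk2 ht
  have hXm : ∀ i, Measurable (X i) := fun i => by
    rw [show X i = _ from funext (hX i)]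
    fun_prop
  have hX₀ : ∀ i ω, 0 ≤ X i ω := fun i ω => by rw [hX]; positivity
  set km : Fin n := ⟨k - 1, lt_of_le_of_lt (Nat.sub_le k 1) hk2⟩
  set V := fun ω => fun i : Fin k => X ⟨(i : ℕ), i.isLt.trans hk2⟩ ω
  have hkmV : MeasurableSpace.comap (X km) inferInstance ≤ MeasurableSpace.comap V inferInstance :=
    ((measurable_pi_apply (⟨k - 1, by omega⟩ : Fin k)).comp (comap_measurable V)).comap_le
  exact condExp_ae_eq_condExp_of_forall_setLIntegral_eq hkmV (by fun_prop : Measurable V).comap_le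
    (integrable_exp_neg_mul (hXm _) (hX₀ _) ht)
    ((integrable_exp_neg_mul (hXm _) (hX₀ _) (by positivity : 0 ≤ 2 * β)).const_mul _)
    (ae_of_all _ fun _ => (exp_pos _).le) (ae_of_all _ fun _ => by positivity)
    ((by fun_prop : Measurable fun r => c ^ 2 * exp (-(2 * β) * r)).comp
      (comap_measurable (X km))).stronglyMeasurable
    (hindep.setLIntegral_exp_neg_mul_avg_sq_eq hη hη' hlawη hlawη' hX hc hcβ)
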